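/- arXiv:0808.2083 — 7 statements merged into one kernel-verified Lean document; each statement's English description precedes it below -/
import Mathlib

section
/- Let u and v be bit vectors of length L represented by the strictly increasing lists a = (a_1,…,a_s) and b = (b_1,…,b_t) of the positions of their 1-bits. Define a comparator as follows: initialize a flag f = true; for p = 1, 2, …, min(s,t): if a_p > b_p return f, if a_p < b_p return ¬f, otherwise set f := ¬f and continue; after the loop, return ¬f if s > t, return f if t > s, and return false if s = t. Then the comparator returns true if and only if u <_GC v in Gray-code order. -/
/-- Gray-code order on bit vectors of length `L` (as functions `Fin L → Bool`):
`a <_GC b` iff there is an index `j` such that `a` and `b` agree before `j`,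
differ at `j`, and `a j` equals the XOR of the bits of `a` before `j`. -/
def grayLT {L : ℕ} (a b : Fin L → Bool) : Prop :=
  ∃ j : Fin L, (∀ i, i < j → a i = b i) ∧ a j ≠ b j ∧
    (a j = true ↔ Odd ((Finset.Iio j).filter (fun i => a i = true)).card)

/-- The Gray-code comparator on sparse bit-vector representations (strictly increasing
lists of positions of 1-bits), with a flag `f` initialized to `true`:
at each step compare the current positions, returning `f` if `aₚ > bₚ`,
`¬f` if `aₚ < bₚ`, and flipping `f` otherwise; once one list is exhausted,
return `¬f` if the first list is longer, `f` if the second is longer,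
and `false` if they have the same length. -/
def grayComp : List ℕ → List ℕ → Bool → Bool
  | [], [], _ => false
  | [], _ :: _, f => f
  | _ :: _, [], f => !f
  | x :: xs, y :: ys, f =>
      if y < x then f else if x < y then !f else grayComp xs ys (!f)

/-! The comparator runs through the common prefix of `a` and `b`, flipping its flag once per
shared position, and decides at the first position `j` where the two lists differ: started
with flag `true`, it answers `true` exactly when `j ∈ a` agrees with the parity of the number
of entries of `a` below `j`. Since `j` is also the unique index where `u` and `v` first
differ, this is precisely the condition of `grayLT`. -/

theorem List.countP_lt_eq_zero {α : Type*} [Preorder α] [DecidableLT α] {l : List α} {j : α}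
    (h : ∀ e ∈ l, j ≤ e) : l.countP (· < j) = 0 :=
  countP_eq_zero.2 fun e he => by simpa using (h e he).not_gt

theorem grayComp_self : ∀ (a : List ℕ) (f : Bool), grayComp a a f = false
  | [], _ => rfl
  | _ :: xs, f => by simpa [grayComp] using grayComp_self xs !f

open List in
theorem grayComp_eq_true_iff_of_isLeast {j : ℕ} : ∀ {a b : List ℕ}, a.Pairwise (· < ·) →
    b.Pairwise (· < ·) → IsLeast {n | ¬(n ∈ a ↔ n ∈ b)} j → ∀ f : Bool,
    (grayComp a b f = true ↔ (j ∈ a ↔ (Odd (a.countP (· < j)) ↔ f = true)))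
  | [], [], _, _, hj, _ => absurd hj.1 (by simp)
  | [], _ :: _, _, _, _, f => by simp [grayComp]
  | x :: xs, [], ha, _, hj, f => by
    have hja : j ∈ x :: xs := by_contra fun h => hj.1 (iff_of_false h not_mem_nil)
    have hjx : j ≤ x := hj.2 fun h => not_mem_nil (h.1 mem_cons_self)
    have h0 : (x :: xs).countP (· < j) = 0 :=
      countP_lt_eq_zero fun e he => hjx.trans ((ha.imp LT.lt.le).rel_head he)
    simp [grayComp, hja, h0]
  | x :: xs, y :: ys, ha, hb, hj, f => by
    have hxa (e) (he : e ∈ x :: xs) : x ≤ e := (ha.imp LT.lt.le).rel_head he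
    have hyb (e) (he : e ∈ y :: ys) : y ≤ e := (hb.imp LT.lt.le).rel_head he
    have hmin : min x y ≤ j := by
      by_cases hja : j ∈ x :: xs
      · exact min_le_of_left_le (hxa j hja)
      · exact min_le_of_right_le (hyb j (by_contra fun h => hj.1 (iff_of_false hja h)))
    rcases lt_trichotomy x y with hxy | rfl | hxy
    · have hxb : x ∉ y :: ys := fun h => (hyb x h).not_gt hxy
      obtain rfl : j = x :=
        le_antisymm (hj.2 fun h => hxb (h.1 mem_cons_self)) (by simpa [hxy.le] using hmin)
      simp [grayComp, hxy, hxy.not_gt, countP_lt_eq_zero hxa]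
    · have hxs : x ∉ xs := fun h => lt_irrefl x (rel_of_pairwise_cons ha h)
      have hys : x ∉ ys := fun h => lt_irrefl x (rel_of_pairwise_cons hb h)
      have hS : {n | ¬(n ∈ x :: xs ↔ n ∈ x :: ys)} = {n | ¬(n ∈ xs ↔ n ∈ ys)} := by
        ext n
        rcases eq_or_ne n x with rfl | hnx
        · simp [hxs, hys]
        · simp [hnx]
      rw [hS] at hj
      have hxj : x < j :=
        (min_self x ▸ hmin).lt_of_ne fun h => hj.1 (iff_of_false (h ▸ hxs) (h ▸ hys))
      rw [show grayComp (x :: xs) (x :: ys) f = grayComp xs ys !f by simp [grayComp],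
        grayComp_eq_true_iff_of_isLeast ha.of_cons hb.of_cons hj]
      cases f <;> simp [hxj, hxj.ne', Nat.odd_add_one]
    · have hya : y ∉ x :: xs := fun h => (hxa y h).not_gt hxy
      obtain rfl : j = y :=
        le_antisymm (hj.2 fun h => hya (h.2 mem_cons_self)) (by simpa [hxy.le] using hmin)
      simp [grayComp, hxy, hya, countP_lt_eq_zero fun e he => hxy.le.trans (hxa e he)]

theorem grayLT_iff_of_isLeast {L : ℕ} {u v : Fin L → Bool} {k : Fin L}
    (hk : IsLeast {i | u i ≠ v i} k) :
    grayLT u v ↔ (u k = true ↔ Odd ((Finset.Iio k).filter (fun i => u i = true)).card) := by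
  constructor
  · rintro ⟨j, hbelow, hj, hpar⟩
    obtain rfl : j = k :=
      IsLeast.unique ⟨hj, fun i (hi : u i ≠ v i) => not_lt.1 fun hij => hi (hbelow i hij)⟩ hk
    exact hpar
  · exact fun hpar => ⟨k, fun i hik => not_not.1 fun hi => (hk.2 hi).not_gt hik, hk.1, hpar⟩

theorem card_filter_Iio_eq_countP {L : ℕ} {u : Fin L → Bool} {a : List ℕ} (ha : a.Nodup)
    (haL : ∀ x ∈ a, x < L) (hua : ∀ i : Fin L, u i = true ↔ (i : ℕ) ∈ a) (k : Fin L) :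
    ((Finset.Iio k).filter (fun i => u i = true)).card = a.countP (· < (k : ℕ)) := by
  rw [List.countP_eq_length_filter, ← List.toFinset_card_of_nodup (ha.filter _),
    ← Finset.card_map Fin.valEmbedding]
  congr 1
  ext n
  simp only [Finset.mem_map, Finset.mem_filter, Finset.mem_Iio, Fin.valEmbedding_apply,
    List.mem_toFinset, List.mem_filter, decide_eq_true_eq, hua]
  constructor
  · rintro ⟨i, ⟨hik, hia⟩, rfl⟩
    exact ⟨hia, hik⟩
  · rintro ⟨hna, hnk⟩
    exact ⟨⟨n, haL n hna⟩, ⟨hnk, hna⟩, rfl⟩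

/-- If `u` and `v` are bit vectors of length `L` represented sparsely by the strictly
increasing lists `a` and `b` of the positions of their 1-bits, then the comparator
(started with flag `true`) returns `true` if and only if `u <_GC v`. -/
theorem grayComp_iff_grayLT (L : ℕ) (u v : Fin L → Bool) (a b : List ℕ)
    (ha : a.Pairwise (· < ·)) (hb : b.Pairwise (· < ·))
    (haL : ∀ x ∈ a, x < L) (hbL : ∀ x ∈ b, x < L)
    (hua : ∀ i : Fin L, u i = true ↔ (i : ℕ) ∈ a)
    (hvb : ∀ i : Fin L, v i = true ↔ (i : ℕ) ∈ b) :
    grayComp a b true = true ↔ grayLT u v := by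
  classical
  have huv (i : Fin L) : u i ≠ v i ↔ ¬((i : ℕ) ∈ a ↔ (i : ℕ) ∈ b) := by
    rw [Ne, Bool.eq_iff_iff, hua, hvb]
  by_cases hab : ∀ n, n ∈ a ↔ n ∈ b
  · rw [ha.eq_of_mem_iff hb hab, grayComp_self, Bool.false_eq_true, false_iff]
    exact fun ⟨k, _, hk, _⟩ => (huv k).1 hk (hab k)
  obtain ⟨j, hj⟩ : ∃ j, IsLeast {n | ¬(n ∈ a ↔ n ∈ b)} j :=
    ⟨_, Nat.isLeast_find (not_forall.1 hab)⟩
  have hjL : j < L := by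
    by_cases hja : j ∈ a
    · exact haL j hja
    · exact hbL j (by_contra fun h => hj.1 (iff_of_false hja h))
  have hk : IsLeast {i : Fin L | u i ≠ v i} ⟨j, hjL⟩ :=
    ⟨(huv _).2 hj.1, fun i hi => Fin.le_def.2 (hj.2 ((huv i).1 hi))⟩
  rw [grayComp_eq_true_iff_of_isLeast ha hb hj, grayLT_iff_of_isLeast hk,
    card_filter_Iio_eq_countP ha.nodup haL hua, hua]
  simp
end

section
/- For all integers 1 ≤ k ≤ N, there exists a sequence v_1, v_2, …, v_M with M = C(N,k) that lists every k-of-N code exactly once, such that v_1 <_GC v_2 <_GC ⋯ <_GC v_M (the sequence is strictly increasing in Gray-code order) and the Hamming distance h(v_t, v_{t+1}) equals 2 for every 1 ≤ t < M. -/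
/-- A `k`-of-`N` code: a bit vector of length `N` with exactly `k` ones. -/
def isKofN (N k : ℕ) (x : Fin N → Bool) : Prop :=
  ((Finset.univ : Finset (Fin N)).filter (fun i => x i = true)).card = k

/-!
The binary reflected Gray code `B 0 = [ε]`, `B (n + 1) = 0·B n ++ (1·B n)ᵀ` (`ᵀ` = reversal)
lists all bit vectors in strictly increasing Gray-code order: a leading `1` flips the parity that
decides how the tails compare, so reversing the second half is exactly what the order asks for.

Its sublist `W n k` of weight-`k` codes is therefore sorted too, and satisfies
`W (n + 1) (k + 1) = 0·W n (k + 1) ++ (1·W n k)ᵀ`. Consecutive codes inside each half are at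
distance `2` by induction. At the seam, the last codes of `W n (k + 1)` and of `W n k` are
`1 0^(n-k-1) 1^k` and `1 0^(n-k) 1^(k-1)` (or `0^n` when `k = 0`), at distance `1`, and the
leading bits add one more.

Here `B = reflectedGray` and `W = grayKofN`.
-/

open Finset

theorem Fin.cons_const {α : Type*} {n : ℕ} (a : α) :
    (Fin.cons a fun _ => a : Fin (n + 1) → α) = fun _ => a :=
  funext fun i => Fin.cases rfl (fun _ => rfl) i

theorem Fin.card_filter_Iio_succ {n : ℕ} (p : Fin (n + 1) → Prop) [DecidablePred p]
    (j : Fin n) :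
    #{i ∈ Iio j.succ | p i} = ite (p 0) 1 0 + #{i ∈ Iio j | p i.succ} := by
  rw [← filter_gt_eq_Iio, ← filter_gt_eq_Iio, filter_filter, filter_filter,
    Fin.card_filter_univ_succ']
  simp only [Fin.succ_pos, true_and, Fin.succ_lt_succ_iff]

theorem hammingDist_cons {β : Type*} [DecidableEq β] {n : ℕ} (a b : β) (x y : Fin n → β) :
    hammingDist (Fin.cons a x : Fin (n + 1) → β) (Fin.cons b y) =
      ite (a ≠ b) 1 0 + hammingDist x y := by
  simp only [hammingDist, Fin.card_filter_univ_succ', Fin.cons_zero, Fin.cons_succ]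

def weight {n : ℕ} (x : Fin n → Bool) : ℕ := #{i | x i = true}

theorem weight_cons {n : ℕ} (c : Bool) (x : Fin n → Bool) :
    weight (Fin.cons c x : Fin (n + 1) → Bool) = ite (c = true) 1 0 + weight x := by
  simp only [weight, Fin.card_filter_univ_succ', Fin.cons_zero, Fin.cons_succ]

theorem weight_le {n : ℕ} (x : Fin n → Bool) : weight x ≤ n :=
  (card_filter_le _ _).trans_eq (card_fin n)

theorem grayLT.ne {L : ℕ} {a b : Fin L → Bool} (h : grayLT a b) : a ≠ b := by
  rintro rfl
  obtain ⟨j, -, hj, -⟩ := h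
  exact hj rfl

section GrayOrder

variable {n : ℕ} (x y : Fin n → Bool)

theorem grayLT_cons_cons_iff (c : Bool) :
    grayLT (Fin.cons c x : Fin (n + 1) → Bool) (Fin.cons c y) ↔
      ∃ j, (∀ i < j, x i = y i) ∧ x j ≠ y j ∧
        (x j = true ↔ Odd (ite (c = true) 1 0 + #{i ∈ Iio j | x i = true})) := by
  simp only [grayLT, Fin.exists_fin_succ, Fin.forall_fin_succ, Fin.cons_zero, Fin.cons_succ,
    Fin.card_filter_Iio_succ, ne_eq, not_true_eq_false, false_and, and_false, false_or,
    Fin.succ_lt_succ_iff, imp_true_iff, true_and, Fin.not_lt_zero]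

theorem grayLT_cons_false_cons_false_iff :
    grayLT (Fin.cons false x : Fin (n + 1) → Bool) (Fin.cons false y) ↔ grayLT x y := by
  rw [grayLT_cons_cons_iff]
  simp [grayLT]

theorem grayLT_cons_true_cons_true_iff :
    grayLT (Fin.cons true x : Fin (n + 1) → Bool) (Fin.cons true y) ↔ grayLT y x := by
  rw [grayLT_cons_cons_iff, grayLT]
  refine exists_congr fun j => ?_
  simp only [@eq_comm _ (y _) (x _), ne_comm (a := y j)]
  refine and_congr_right fun hlt => and_congr_right fun hne => ?_
  have hcount : #{i ∈ Iio j | x i = true} = #{i ∈ Iio j | y i = true} :=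
    congrArg card (filter_congr fun i hi => by rw [hlt i (mem_Iio.mp hi)])
  rw [hcount, if_pos trivial, add_comm, Nat.odd_add_one]
  revert hne
  cases x j <;> cases y j <;> simp

theorem grayLT_cons_false_cons_true :
    grayLT (Fin.cons false x : Fin (n + 1) → Bool) (Fin.cons true y) :=
  ⟨0, fun i hi => absurd hi (Fin.not_lt_zero i), by simp,
    by rw [show Iio (0 : Fin (n + 1)) = ∅ from Iio_bot]; simp⟩

end GrayOrder

def reflectedGray : (n : ℕ) → List (Fin n → Bool)
  | 0 => [Fin.elim0]
  | n + 1 =>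
    (reflectedGray n).map (Fin.cons false) ++ ((reflectedGray n).map (Fin.cons true)).reverse

theorem mem_reflectedGray : ∀ {n : ℕ} (x : Fin n → Bool), x ∈ reflectedGray n
  | 0, x => List.mem_singleton.mpr (funext fun i => i.elim0)
  | n + 1, x => by
    rw [← Fin.cons_self_tail x]
    cases x 0 <;> simp [reflectedGray, mem_reflectedGray]

theorem pairwise_grayLT_reflectedGray : ∀ n : ℕ, (reflectedGray n).Pairwise grayLT
  | 0 => List.pairwise_singleton _ _
  | n + 1 => by
    rw [reflectedGray, List.pairwise_append, List.pairwise_reverse, List.pairwise_map,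
      List.pairwise_map]
    refine ⟨(pairwise_grayLT_reflectedGray n).imp (grayLT_cons_false_cons_false_iff _ _).mpr,
      (pairwise_grayLT_reflectedGray n).imp (grayLT_cons_true_cons_true_iff _ _).mpr, ?_⟩
    simp only [List.mem_reverse, List.mem_map]
    rintro _ ⟨x, -, rfl⟩ _ ⟨y, -, rfl⟩
    exact grayLT_cons_false_cons_true x y

theorem filter_reflectedGray_succ {n : ℕ} (p : (Fin (n + 1) → Bool) → Bool) :
    (reflectedGray (n + 1)).filter p =
      ((reflectedGray n).filter (p ∘ Fin.cons false)).map (Fin.cons false) ++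
        (((reflectedGray n).filter (p ∘ Fin.cons true)).map (Fin.cons true)).reverse := by
  rw [reflectedGray, List.filter_append, List.filter_reverse, List.filter_map, List.filter_map]

def grayKofN (n k : ℕ) : List (Fin n → Bool) :=
  (reflectedGray n).filter (fun x => weight x = k)

section GrayKofN

variable {n k : ℕ}

theorem mem_grayKofN {x : Fin n → Bool} : x ∈ grayKofN n k ↔ isKofN n k x := by
  simp only [grayKofN, List.mem_filter, mem_reflectedGray, true_and, decide_eq_true_iff]
  rfl

theorem grayKofN_succ_zero : grayKofN (n + 1) 0 = (grayKofN n 0).map (Fin.cons false) := by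
  simp [grayKofN, filter_reflectedGray_succ, Function.comp_def, weight_cons]

theorem grayKofN_succ_succ : grayKofN (n + 1) (k + 1) =
    (grayKofN n (k + 1)).map (Fin.cons false) ++ ((grayKofN n k).map (Fin.cons true)).reverse := by
  simp [grayKofN, filter_reflectedGray_succ, Function.comp_def, weight_cons, add_comm]

theorem grayKofN_eq_nil (h : n < k) : grayKofN n k = [] :=
  List.filter_eq_nil_iff.mpr fun x _ => by simpa using ((weight_le x).trans_lt h).ne

theorem grayKofN_zero : grayKofN n 0 = [fun _ => false] := by
  induction n with
  | zero => simp [grayKofN, reflectedGray, weight, funext_iff]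
  | succ n ih =>
    rw [grayKofN_succ_zero, ih, List.map_singleton, Fin.cons_const]

theorem grayKofN_self : grayKofN n n = [fun _ => true] := by
  induction n with
  | zero => simp [grayKofN, reflectedGray, weight, funext_iff]
  | succ n ih =>
    rw [grayKofN_succ_succ, ih, grayKofN_eq_nil n.lt_succ_self, List.map_nil, List.nil_append,
      List.map_singleton, List.reverse_singleton, Fin.cons_const]

theorem length_grayKofN : ∀ n k, (grayKofN n k).length = n.choose k
  | n, 0 => by rw [grayKofN_zero, List.length_singleton, Nat.choose_zero_right]
  | 0, k + 1 => by rw [grayKofN_eq_nil k.succ_pos, List.length_nil, Nat.choose_zero_succ]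
  | n + 1, k + 1 => by
    rw [grayKofN_succ_succ, List.length_append, List.length_reverse, List.length_map,
      List.length_map, length_grayKofN n (k + 1), length_grayKofN n k, Nat.choose_succ_succ',
      add_comm]

def trailingOnes (n k : ℕ) : Fin n → Bool := fun i => n - k ≤ i

theorem trailingOnes_zero : trailingOnes n 0 = fun _ => false :=
  funext fun i => by simp [trailingOnes]

theorem cons_false_trailingOnes (h : k ≤ n) :
    Fin.cons false (trailingOnes n k) = trailingOnes (n + 1) k := by
  refine funext fun i => Fin.cases ?_ (fun i => ?_) i
  · simp [trailingOnes]
    omega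
  · simp only [Fin.cons_succ, trailingOnes, Fin.val_succ, decide_eq_decide]
    omega

theorem head?_grayKofN : ∀ {n k : ℕ}, k ≤ n → (grayKofN n k).head? = some (trailingOnes n k)
  | n, 0, _ => by
    rw [grayKofN_zero]
    simp [trailingOnes, funext_iff]
  | n + 1, k + 1, h => by
    rcases (Nat.le_of_succ_le_succ h).eq_or_lt with rfl | hlt
    · simp [grayKofN_self, trailingOnes, funext_iff]
    · rw [grayKofN_succ_succ, List.head?_append, List.head?_map, head?_grayKofN hlt,
        Option.map_some, Option.some_or, cons_false_trailingOnes hlt]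

theorem getLast?_grayKofN_succ_succ (h : k ≤ n) :
    (grayKofN (n + 1) (k + 1)).getLast? = some (Fin.cons true (trailingOnes n k)) := by
  rw [grayKofN_succ_succ, List.getLast?_append, List.getLast?_reverse, List.head?_map,
    head?_grayKofN h, Option.map_some, Option.some_or]

theorem hammingDist_trailingOnes_succ (h : k < n) :
    hammingDist (trailingOnes n (k + 1)) (trailingOnes n k) = 1 := by
  rw [hammingDist, card_eq_one]
  refine ⟨⟨n - k - 1, by omega⟩, ext fun i => ?_⟩
  simp only [mem_filter, mem_univ, true_and, mem_singleton, trailingOnes, ne_eq,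
    decide_eq_decide, Fin.ext_iff]
  omega

theorem hammingDist_getLast?_grayKofN : ∀ {n k : ℕ}, k < n →
    ∀ x ∈ (grayKofN n (k + 1)).getLast?, ∀ y ∈ (grayKofN n k).getLast?, hammingDist x y = 1
  | m + 1, 0, _ => by
    simp only [getLast?_grayKofN_succ_succ m.zero_le, grayKofN_zero, List.getLast?_singleton,
      Option.mem_def, Option.some.injEq, trailingOnes_zero]
    rintro _ rfl _ rfl
    rw [← Fin.cons_const false, hammingDist_cons, hammingDist_self]
    rfl
  | m + 1, j + 1, h => by
    have hj : j < m := Nat.succ_lt_succ_iff.mp h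
    simp only [getLast?_grayKofN_succ_succ hj, getLast?_grayKofN_succ_succ hj.le,
      Option.mem_def, Option.some.injEq]
    rintro _ rfl _ rfl
    rw [hammingDist_cons, hammingDist_trailingOnes_succ hj]
    rfl

theorem isChain_grayKofN : ∀ n k, (grayKofN n k).IsChain (fun x y => hammingDist x y = 2)
  | n, 0 => by rw [grayKofN_zero]; exact List.isChain_singleton _
  | 0, k + 1 => by rw [grayKofN_eq_nil k.succ_pos]; exact List.isChain_nil
  | n + 1, k + 1 => by
    rw [grayKofN_succ_succ, List.isChain_append, List.isChain_reverse, List.isChain_map,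
      List.isChain_map]
    refine ⟨(isChain_grayKofN n (k + 1)).imp fun x y h => ?_,
      (isChain_grayKofN n k).imp fun x y h => ?_, ?_⟩
    · simp [hammingDist_cons, h]
    · simp [hammingDist_cons, hammingDist_comm, h]
    · rcases lt_or_ge k n with hk | hk
      · rw [List.getLast?_map, List.head?_reverse, List.getLast?_map]
        simp only [Option.mem_map]
        rintro _ ⟨x, hx, rfl⟩ _ ⟨y, hy, rfl⟩
        rw [hammingDist_cons, hammingDist_getLast?_grayKofN hk x hx y hy]
        rfl
      · simp [grayKofN_eq_nil (Nat.lt_succ_of_le hk)]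

theorem pairwise_grayLT_grayKofN (n k : ℕ) : (grayKofN n k).Pairwise grayLT :=
  (pairwise_grayLT_reflectedGray n).filter _

end GrayKofN

/-- For `1 ≤ k ≤ N` there is a sequence `v_1, …, v_M` with `M = C(N,k)` listing every
`k`-of-`N` code exactly once, strictly increasing in Gray-code order, in which
consecutive codes are at Hamming distance exactly `2`. -/
theorem exists_gray_enumeration_kofN (N k : ℕ) :
    ∃ v : Fin (N.choose k) → (Fin N → Bool),
      (∀ t, isKofN N k (v t)) ∧
      Function.Injective v ∧
      (∀ x : Fin N → Bool, isKofN N k x → ∃ t, v t = x) ∧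
      (∀ (t : ℕ) (h : t + 1 < N.choose k),
        grayLT (v ⟨t, by omega⟩) (v ⟨t + 1, h⟩) ∧
        hammingDist (v ⟨t, by omega⟩) (v ⟨t + 1, h⟩) = 2) := by
  have hlen := length_grayKofN N k
  have hsorted := pairwise_grayLT_grayKofN N k
  refine ⟨fun t => (grayKofN N k)[(t : ℕ)]'(hlen.symm ▸ t.isLt), fun t => ?_,
    fun s t hst => ?_, fun x hx => ?_, fun t h => ?_⟩
  · exact mem_grayKofN.mp (List.getElem_mem _)
  · exact Fin.ext ((List.Nodup.getElem_inj_iff (hsorted.imp grayLT.ne)).mp hst)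
  · obtain ⟨i, hi, rfl⟩ := List.getElem_of_mem (mem_grayKofN.mpr hx)
    exact ⟨⟨i, hlen ▸ hi⟩, rfl⟩
  · exact ⟨List.pairwise_iff_getElem.mp hsorted t (t + 1) _ _ t.lt_succ_self,
      List.isChain_iff_getElem.mp (isChain_grayKofN N k) t _⟩
end

section
/- Represent each k-of-N code by the strictly increasing tuple (a_1 < a_2 < ⋯ < a_k) of the positions of its ones, and order these tuples by the alternating lexicographic order: tuples are compared on a_1 in ascending order, ties are broken on a_2 in descending order, then on a_3 in ascending order, and so on (coordinate i is compared ascending when i is odd and descending when i is even). Then any two tuples that are consecutive in this total order correspond to k-of-N codes whose Hamming distance is exactly 2 (equivalently, the corresponding k-element subsets of {1,…,N} differ by exchanging exactly one element). -/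
/-- Alternating lexicographic order on strictly increasing `k`-tuples of positions:
tuples are compared on the first coordinate where they differ, ascending at
coordinates with even 0-based index (odd 1-based index) and descending at
coordinates with odd 0-based index (even 1-based index). -/
def altLexLT {k N : ℕ} (a b : Fin k → Fin N) : Prop :=
  ∃ j : Fin k, (∀ i, i < j → a i = b i) ∧
    (if Even (j : ℕ) then a j < b j else b j < a j)

/-- The `k`-of-`N` code (bit vector of length `N`) whose ones are at the positions
listed by the tuple `a`. -/
def codeOf {k N : ℕ} (a : Fin k → Fin N) : Fin N → Bool :=
  fun p => decide (∃ i, a i = p)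

/-! Let `a` and `b` be consecutive and first differ at `j`, with `a j < b j`. Each of the
following is forced by writing down, were it false, a strictly increasing tuple strictly
between `a` and `b` (a one-entry change of `a` or `b`, or `a` resp. `b` with its tail raised
to the largest admissible values `N - k + i`): `a (j+1) = b j`, the tail of `b` after `j`
is maximal, and the tail of `a` after `j+1` is maximal. So the position sets of `a` and `b`
differ by exchanging `a j` for one position. When `b j < a j` instead, shifting the parity
of the comparison rule reverses the order, and swapping `a` and `b` reduces to the first case. -/

open Finset Function

theorem StrictMono.update {α β : Type*} [Preorder α] [Preorder β] [DecidableEq α]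
    {f : α → β} (hf : StrictMono f) {j : α} {v : β} (hlt : ∀ i < j, f i < v)
    (hgt : ∀ i, j < i → v < f i) : StrictMono (update f j v) := by
  intro x y hxy
  by_cases hx : x = j <;> by_cases hy : y = j
  · exact absurd (hx.trans hy.symm ▸ hxy) (lt_irrefl y)
  · rw [hx] at hxy ⊢
    rw [update_self, update_of_ne hy]
    exact hgt y hxy
  · rw [hy] at hxy ⊢
    rw [update_self, update_of_ne hx]
    exact hlt x hxy
  · rw [update_of_ne hx, update_of_ne hy]
    exact hf hxy

theorem StrictMono.ite_lt {α β : Type*} [LinearOrder α] [Preorder β] {f g : α → β}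
    (hf : StrictMono f) (hg : StrictMono g) (hfg : f ≤ g) (m : α) :
    StrictMono fun i => if i < m then f i else g i := by
  intro x y hxy
  by_cases hx : x < m <;> by_cases hy : y < m <;> simp only [hx, hy, if_true, if_false]
  · exact hf hxy
  · exact (hfg x).trans_lt (hg hxy)
  · exact absurd (hxy.trans hy) hx
  · exact hg hxy

variable {k N : ℕ}

theorem StrictMono.val_sub_le_val_sub {a : Fin k → Fin N} (ha : StrictMono a) {i i' : Fin k}
    (h : i ≤ i') : (i' : ℕ) - i ≤ a i' - a i := by
  have hmaps : Set.MapsTo a (Icc i i') (Icc (a i) (a i')) := fun x hx => by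
    simp only [coe_Icc, Set.mem_Icc] at hx ⊢
    exact ⟨ha.monotone hx.1, ha.monotone hx.2⟩
  have := card_le_card_of_injOn a hmaps ha.injective.injOn
  simp only [Fin.card_Icc] at this
  omega

def topTuple (hkN : k ≤ N) : Fin k → Fin N := fun i => ⟨N - k + i, by omega⟩

theorem strictMono_topTuple (hkN : k ≤ N) : StrictMono (topTuple hkN) :=
  fun i i' h => by simp only [topTuple, Fin.mk_lt_mk]; have := Fin.lt_def.1 h; omega

theorem StrictMono.le_topTuple {a : Fin k → Fin N} (ha : StrictMono a) (hkN : k ≤ N) :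
    a ≤ topTuple hkN := fun i => by
  have hmaps : Set.MapsTo a (Ici i) (Ici (a i)) := fun x hx => by
    simp only [coe_Ici, Set.mem_Ici] at hx ⊢
    exact ha.monotone hx
  have := card_le_card_of_injOn a hmaps ha.injective.injOn
  simp only [Fin.card_Ici] at this
  simp only [topTuple, Fin.le_def]
  omega

theorem StrictMono.eq_topTuple_of_le {a : Fin k → Fin N} (ha : StrictMono a) (hkN : k ≤ N)
    {m i : Fin k} (hm : a m = topTuple hkN m) (hmi : m ≤ i) : a i = topTuple hkN i := by
  have h1 := ha.val_sub_le_val_sub hmi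
  have h2 := ha.le_topTuple hkN i
  have h3 := ha.monotone hmi
  simp only [topTuple, Fin.ext_iff, Fin.le_def] at hm h2 h3 hmi ⊢
  omega

theorem hammingDist_codeOf (a b : Fin k → Fin N) :
    hammingDist (codeOf a) (codeOf b) =
      #(univ.image a \ univ.image b) + #(univ.image b \ univ.image a) := by
  rw [hammingDist, ← card_union_of_disjoint disjoint_sdiff_sdiff]
  congr 1
  ext p
  simp only [codeOf, mem_filter, mem_univ, true_and, mem_union, mem_sdiff, mem_image, ne_eq,
    decide_eq_decide]
  tauto

theorem Finset.card_sdiff_eq_one_of_subset_singleton {α : Type*} [DecidableEq α]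
    {s t : Finset α} (hcard : #s = #t) (hne : s ≠ t) {x : α} (hx : s \ t ⊆ {x}) :
    #(s \ t) = 1 := by
  have hnonempty : (s \ t).Nonempty :=
    sdiff_nonempty.2 fun hst => hne (eq_of_subset_of_card_le hst hcard.ge)
  rw [hnonempty.subset_singleton_iff.1 hx, card_singleton]

-- `altLexLTShift 0` is `altLexLT` by definition.
def altLexLTShift (r : ℕ) (a b : Fin k → Fin N) : Prop :=
  ∃ j : Fin k, (∀ i, i < j → a i = b i) ∧
    (if Even ((j : ℕ) + r) then a j < b j else b j < a j)

theorem altLexLTShift_succ {r : ℕ} {a b : Fin k → Fin N} :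
    altLexLTShift (r + 1) a b ↔ altLexLTShift r b a := by
  refine exists_congr fun j =>
    and_congr ⟨fun h i hi => (h i hi).symm, fun h i hi => (h i hi).symm⟩ ?_
  simp only [← add_assoc, Nat.even_add_one, ite_not]

theorem altLexLTShift_of_even {r : ℕ} {a b : Fin k → Fin N} {j : Fin k}
    (hpre : ∀ i < j, a i = b i) (hj : Even ((j : ℕ) + r)) (h : a j < b j) :
    altLexLTShift r a b :=
  ⟨j, hpre, by rwa [if_pos hj]⟩

theorem altLexLTShift_of_not_even {r : ℕ} {a b : Fin k → Fin N} {j : Fin k}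
    (hpre : ∀ i < j, a i = b i) (hj : ¬Even ((j : ℕ) + r)) (h : b j < a j) :
    altLexLTShift r a b :=
  ⟨j, hpre, by rwa [if_neg hj]⟩

structure IsAltLexCoverAt (r : ℕ) (a b : Fin k → Fin N) (j : Fin k) : Prop where
  strictMono_left : StrictMono a
  strictMono_right : StrictMono b
  eq_of_lt : ∀ i < j, a i = b i
  even : Even ((j : ℕ) + r)
  lt : a j < b j
  not_between : ∀ c, StrictMono c → ¬(altLexLTShift r a c ∧ altLexLTShift r c b)

namespace IsAltLexCoverAt

variable {r : ℕ} {a b : Fin k → Fin N} {i j : Fin k}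

theorem right_le_left_of_lt (h : IsAltLexCoverAt r a b j) (hji : j < i) : b j ≤ a i := by
  by_contra! hlt
  have hc : StrictMono (update b j (a i)) := h.strictMono_right.update
    (fun i' hi' => h.eq_of_lt i' hi' ▸ (h.strictMono_left hi').trans (h.strictMono_left hji))
    (fun i' hi' => hlt.trans (h.strictMono_right hi'))
  refine h.not_between _ hc ⟨altLexLTShift_of_even (fun i' hi' => ?_) h.even ?_,
    altLexLTShift_of_even (fun i' hi' => update_of_ne hi'.ne _ _) h.even ?_⟩
  · rw [update_of_ne hi'.ne, h.eq_of_lt i' hi']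
  · simpa using h.strictMono_left hji
  · simpa using hlt

theorem left_eq_right_of_val_eq_succ (h : IsAltLexCoverAt r a b j) (hi : (i : ℕ) = j + 1) :
    a i = b j := by
  have hji : j < i := Fin.lt_def.2 (by omega)
  refine le_antisymm ?_ (h.right_le_left_of_lt hji)
  by_contra! hlt
  have hc : StrictMono (update a i (b j)) := h.strictMono_left.update
    (fun i' hi' => (h.strictMono_left.monotone (Fin.le_def.2 (by omega))).trans_lt h.lt)
    (fun i' hi' => hlt.trans (h.strictMono_left hi'))
  have hodd : ¬Even ((i : ℕ) + r) := by
    rw [hi, add_right_comm, Nat.even_add_one, not_not]; exact h.even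
  refine h.not_between _ hc
    ⟨altLexLTShift_of_not_even (fun i' hi' => (update_of_ne hi'.ne _ _).symm) hodd ?_,
    altLexLTShift_of_even (fun i' hi' => ?_) h.even ?_⟩
  · simpa using hlt
  · rw [update_of_ne (hi'.trans hji).ne, h.eq_of_lt i' hi']
  · simpa [update_of_ne hji.ne] using h.lt

theorem right_eq_topTuple (h : IsAltLexCoverAt r a b j) (hkN : k ≤ N) (hji : j < i) :
    b i = topTuple hkN i := by
  have hb := h.strictMono_right
  set m : Fin k := ⟨j + 1, by omega⟩
  have hjm : j < m := Fin.lt_def.2 (Nat.lt_succ_self j)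
  refine hb.eq_topTuple_of_le hkN (m := m) ?_ (Fin.le_def.2 (by simp only [m]; omega))
  by_contra hne
  have hlt : b m < topTuple hkN m := (hb.le_topTuple hkN m).lt_of_ne hne
  have hc := hb.ite_lt (strictMono_topTuple hkN) (hb.le_topTuple hkN) m
  have hodd : ¬Even ((m : ℕ) + r) := by
    rw [add_right_comm, Nat.even_add_one, not_not]; exact h.even
  refine h.not_between _ hc ⟨altLexLTShift_of_even (fun i' hi' => ?_) h.even ?_,
    altLexLTShift_of_not_even (fun i' hi' => ?_) hodd ?_⟩
  · rw [if_pos (hi'.trans hjm), h.eq_of_lt i' hi']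
  · simpa [if_pos hjm] using h.lt
  · rw [if_pos hi']
  · simpa using hlt

theorem left_eq_topTuple (h : IsAltLexCoverAt r a b j) (hkN : k ≤ N) (hji : (j : ℕ) + 1 < i) :
    a i = topTuple hkN i := by
  have ha := h.strictMono_left
  set m : Fin k := ⟨j + 2, by omega⟩
  have hjm : j < m := Fin.lt_def.2 (by simp [m])
  refine ha.eq_topTuple_of_le hkN (m := m) ?_ (Fin.le_def.2 (by simp only [m]; omega))
  by_contra hne
  have hlt : a m < topTuple hkN m := (ha.le_topTuple hkN m).lt_of_ne hne
  have hc := ha.ite_lt (strictMono_topTuple hkN) (ha.le_topTuple hkN) m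
  have heven : Even ((m : ℕ) + r) := by
    simpa [m, add_right_comm _ 2 r, Nat.even_add] using h.even
  refine h.not_between _ hc ⟨altLexLTShift_of_even (fun i' hi' => ?_) heven ?_,
    altLexLTShift_of_even (fun i' hi' => ?_) h.even ?_⟩
  · rw [if_pos hi']
  · simpa using hlt
  · rw [if_pos (hi'.trans hjm), h.eq_of_lt i' hi']
  · simpa [if_pos hjm] using h.lt

theorem exists_right_eq_left (h : IsAltLexCoverAt r a b j) (hkN : k ≤ N) (hij : i ≠ j) :
    ∃ i', b i' = a i := by
  rcases lt_or_gt_of_ne hij with hlt | hgt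
  · exact ⟨i, (h.eq_of_lt i hlt).symm⟩
  obtain hi | hi : (i : ℕ) = j + 1 ∨ (j : ℕ) + 1 < i := by have := Fin.lt_def.1 hgt; omega
  · exact ⟨j, (h.left_eq_right_of_val_eq_succ hi).symm⟩
  · exact ⟨i, by rw [h.right_eq_topTuple hkN hgt, h.left_eq_topTuple hkN hi]⟩

theorem hammingDist_codeOf_eq_two (h : IsAltLexCoverAt r a b j) (hkN : k ≤ N) :
    hammingDist (codeOf a) (codeOf b) = 2 := by
  have hcard : #(univ.image a) = #(univ.image b) := by
    rw [card_image_of_injective _ h.strictMono_left.injective,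
      card_image_of_injective _ h.strictMono_right.injective]
  have hne : univ.image a ≠ univ.image b := fun himage => by
    have hrange : Set.range a = Set.range b := by
      simpa using congrArg (fun s : Finset (Fin N) => (s : Set (Fin N))) himage
    exact h.lt.ne (congrFun ((h.strictMono_left.range_inj h.strictMono_right).1 hrange) j)
  have hsub : univ.image a \ univ.image b ⊆ {a j} := by
    intro p hp
    simp only [mem_sdiff, mem_image, mem_univ, true_and, not_exists] at hp
    obtain ⟨⟨i, rfl⟩, hnot⟩ := hp
    obtain rfl | hij := eq_or_ne i j
    · exact mem_singleton_self _
    · obtain ⟨i', hi'⟩ := h.exists_right_eq_left hkN hij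
      exact absurd hi' (hnot i')
  rw [hammingDist_codeOf, ← card_sdiff_comm hcard,
    card_sdiff_eq_one_of_subset_singleton hcard hne hsub]

end IsAltLexCoverAt

theorem hammingDist_eq_two_of_consecutive_altLex_general (N k : ℕ) (hkN : k ≤ N)
    (a b : Fin k → Fin N) (ha : StrictMono a) (hb : StrictMono b)
    (hab : altLexLT a b)
    (hconsec : ∀ c : Fin k → Fin N, StrictMono c → ¬ (altLexLT a c ∧ altLexLT c b)) :
    hammingDist (codeOf a) (codeOf b) = 2 := by
  obtain ⟨j, hpre, hcmp⟩ := hab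
  by_cases hj : Even (j : ℕ)
  · rw [if_pos hj] at hcmp
    have hcover : IsAltLexCoverAt 0 a b j := ⟨ha, hb, hpre, hj, hcmp, hconsec⟩
    exact hcover.hammingDist_codeOf_eq_two hkN
  · rw [if_neg hj] at hcmp
    have hcover : IsAltLexCoverAt 1 b a j :=
      ⟨hb, ha, fun i hi => (hpre i hi).symm, Nat.even_add_one.2 hj, hcmp, fun c hc hbetween =>
        hconsec c hc ⟨altLexLTShift_succ.1 hbetween.2, altLexLTShift_succ.1 hbetween.1⟩⟩
    rw [hammingDist_comm]
    exact hcover.hammingDist_codeOf_eq_two hkN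

/-- If two strictly increasing `k`-tuples (of positions of ones of `k`-of-`N` codes,
`1 ≤ k ≤ N`) are consecutive in the alternating lexicographic order—i.e. `a` precedes
`b` and no strictly increasing tuple lies strictly between them—then the corresponding
codes have Hamming distance exactly `2`. -/
theorem hammingDist_eq_two_of_consecutive_altLex (N k : ℕ) (hk : 1 ≤ k) (hkN : k ≤ N)
    (a b : Fin k → Fin N) (ha : StrictMono a) (hb : StrictMono b)
    (hab : altLexLT a b)
    (hconsec : ∀ c : Fin k → Fin N, StrictMono c → ¬ (altLexLT a c ∧ altLexLT c b)) :
    hammingDist (codeOf a) (codeOf b) = 2 :=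
  hammingDist_eq_two_of_consecutive_altLex_general N k hkN a b ha hb hab hconsec
end

section
/- Let 1 ≤ k ≤ N and M = C(N,k). For every sequence w_1, w_2, …, w_M that lists each k-of-N code exactly once, the total Hamming cost Σ_{t=1}^{M−1} h(w_t, w_{t+1}) is at least 2(M−1); moreover this minimum is attained: there is an enumeration of all k-of-N codes (the Gray-code enumeration) whose consecutive Hamming distances are all exactly 2, so its total Hamming cost equals 2(M−1). -/
/-!
Coordinatewise, `[a ≠ b] + 2 [a ∧ b] = a + b`; summing, two codes of equal weight are at even
Hamming distance, so distinct ones are at distance at least `2`, which gives the lower bound.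
The minimum is attained by the revolving-door Gray code: list the `k`-of-`n` codes with first
bit `0` in revolving-door order, then those with first bit `1` in reverse revolving-door order.
Inside each half consecutive codes are at distance `2` by induction, and at the junction the
last code of the first half and the first of the second differ in two coordinates, as the
explicit endpoints `0⋯01⋯1` (first) and `10⋯01⋯1` (last) show.
-/

open Finset

theorem hammingDist_add_two_mul_card_and {ι : Type*} [Fintype ι] (x y : ι → Bool) :
    hammingDist x y + 2 * #{i | x i = true ∧ y i = true} =
      #{i | x i = true} + #{i | y i = true} := by
  simp only [hammingDist, card_filter, mul_sum, ← sum_add_distrib]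
  refine sum_congr rfl fun i _ => ?_
  cases x i <;> cases y i <;> rfl

theorem two_le_hammingDist_of_isKofN {N k : ℕ} {x y : Fin N → Bool} (hx : isKofN N k x)
    (hy : isKofN N k y) (hxy : x ≠ y) : 2 ≤ hammingDist x y := by
  have hpos := hammingDist_pos.2 hxy
  have := hammingDist_add_two_mul_card_and x y
  unfold isKofN at hx hy
  omega

theorem hammingDist_cons_cons {n : ℕ} {β : Type*} [DecidableEq β] (a b : β) (x y : Fin n → β) :
    hammingDist (Fin.cons a x : Fin (n + 1) → β) (Fin.cons b y) =
      (if a = b then 0 else 1) + hammingDist x y := by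
  simp only [hammingDist, card_filter, Fin.sum_univ_succ, Fin.cons_zero, Fin.cons_succ]
  split_ifs <;> simp_all

theorem isKofN_cons_false {n k : ℕ} (x : Fin n → Bool) :
    isKofN (n + 1) k (Fin.cons false x) ↔ isKofN n k x := by
  simp only [isKofN, card_filter, Fin.sum_univ_succ, Fin.cons_zero, Fin.cons_succ]
  simp

theorem isKofN_cons_true {n k : ℕ} (x : Fin n → Bool) :
    isKofN (n + 1) (k + 1) (Fin.cons true x) ↔ isKofN n k x := by
  simp only [isKofN, card_filter, Fin.sum_univ_succ, Fin.cons_zero, Fin.cons_succ]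
  simp
  omega

theorem isKofN_zero_iff {n : ℕ} (x : Fin n → Bool) : isKofN n 0 x ↔ x = fun _ => false := by
  simp [isKofN, filter_eq_empty_iff, funext_iff]

def revolvingDoor : (n k : ℕ) → List (Fin n → Bool)
  | _, 0 => [fun _ => false]
  | 0, _ + 1 => []
  | n + 1, k + 1 =>
    (revolvingDoor n (k + 1)).map (Fin.cons false) ++
      (revolvingDoor n k).reverse.map (Fin.cons true)

theorem length_revolvingDoor (n k : ℕ) : (revolvingDoor n k).length = n.choose k := by
  induction n generalizing k with
  | zero => cases k <;> rfl
  | succ n ih =>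
    cases k with
    | zero => rfl
    | succ k => simp [revolvingDoor, ih, Nat.choose_succ_succ', add_comm]

theorem mem_revolvingDoor_iff {n k : ℕ} {x : Fin n → Bool} :
    x ∈ revolvingDoor n k ↔ isKofN n k x := by
  induction n generalizing k with
  | zero =>
    cases k with
    | zero => simp [revolvingDoor, isKofN, funext_iff]
    | succ k => simp [revolvingDoor, isKofN]
  | succ n ih =>
    cases k with
    | zero => simp [revolvingDoor, isKofN_zero_iff]
    | succ k =>
      rw [← Fin.cons_self_tail x]
      cases x 0 <;>
        simp [revolvingDoor, ih, isKofN_cons_false, isKofN_cons_true, Fin.cons_right_injective]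

theorem nodup_revolvingDoor (n k : ℕ) : (revolvingDoor n k).Nodup := by
  induction n generalizing k with
  | zero => cases k <;> simp [revolvingDoor]
  | succ n ih =>
    cases k with
    | zero => simp [revolvingDoor]
    | succ k =>
      refine List.Nodup.append ((ih _).map (Fin.cons_right_injective _))
        ((List.nodup_reverse.2 (ih _)).map (Fin.cons_right_injective _)) ?_
      simp [List.disjoint_left]

def lastOnes (n k : ℕ) : Fin n → Bool := fun i => decide (n ≤ i + k)

theorem revolvingDoor_eq_nil {n k : ℕ} (h : n < k) : revolvingDoor n k = [] := by
  rw [← List.length_eq_zero_iff, length_revolvingDoor, Nat.choose_eq_zero_of_lt h]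

theorem revolvingDoor_self (n : ℕ) : revolvingDoor n n = [fun _ => true] := by
  induction n with
  | zero => simp [revolvingDoor, funext_iff]
  | succ n ih => simp [revolvingDoor, revolvingDoor_eq_nil, ih, funext_iff, Fin.forall_fin_succ]

theorem head?_revolvingDoor {n k : ℕ} (h : k ≤ n) :
    (revolvingDoor n k).head? = some (lastOnes n k) := by
  induction n generalizing k with
  | zero =>
    obtain rfl : k = 0 := by omega
    simp [revolvingDoor, funext_iff]
  | succ n ih =>
    obtain rfl | hk := Nat.eq_or_lt_of_le h
    · simp [revolvingDoor_self, lastOnes, funext_iff]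
    cases k with
    | zero =>
      simp [revolvingDoor, lastOnes, funext_iff]
      omega
    | succ k =>
      have hne : revolvingDoor n (k + 1) ≠ [] := by
        simpa [← List.length_pos_iff, length_revolvingDoor] using Nat.choose_pos (by omega)
      rw [revolvingDoor, List.head?_append_of_ne_nil _ (by simpa using hne), List.head?_map,
        ih (by omega)]
      simp [lastOnes, funext_iff, Fin.forall_fin_succ]
      exact ⟨by omega, fun i => by omega⟩

theorem getLast?_revolvingDoor {n k : ℕ} (h : k ≤ n) :
    (revolvingDoor (n + 1) (k + 1)).getLast? = some (Fin.cons true (lastOnes n k)) := by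
  rw [revolvingDoor, List.getLast?_append, List.getLast?_map, List.getLast?_reverse,
    head?_revolvingDoor h]
  simp

theorem hammingDist_lastOnes_succ {n k : ℕ} (h : k < n) :
    hammingDist (lastOnes n (k + 1)) (lastOnes n k) = 1 := by
  rw [hammingDist, card_eq_one]
  refine ⟨⟨n - (k + 1), by omega⟩, ?_⟩
  ext i
  simp [lastOnes, Fin.ext_iff]
  omega

theorem isChain_revolvingDoor (n k : ℕ) :
    (revolvingDoor n k).IsChain (fun x y => hammingDist x y = 2) := by
  induction n generalizing k with
  | zero => cases k <;> simp [revolvingDoor]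
  | succ n ih =>
    cases k with
    | zero => simp [revolvingDoor]
    | succ k =>
      rw [revolvingDoor, List.isChain_append, List.isChain_map, List.isChain_map,
        List.isChain_reverse]
      refine ⟨by simpa [hammingDist_cons_cons] using ih (k + 1),
        by simpa [hammingDist_cons_cons, hammingDist_comm] using ih k, ?_⟩
      obtain hn | hkn := Nat.lt_or_ge n (k + 1)
      · simp [revolvingDoor_eq_nil hn]
      obtain ⟨m, rfl⟩ : ∃ m, n = m + 1 := ⟨n - 1, by omega⟩
      rw [List.getLast?_map, getLast?_revolvingDoor (by omega), List.head?_map,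
        List.head?_reverse]
      cases k with
      | zero =>
        have hzero : (fun _ => false : Fin (m + 1) → Bool) = Fin.cons false (lastOnes m 0) := by
          ext i
          refine Fin.cases rfl (fun i => ?_) i
          simp [lastOnes]
        simp [revolvingDoor, hzero, hammingDist_cons_cons]
      | succ j =>
        rw [getLast?_revolvingDoor (by omega)]
        simp [hammingDist_cons_cons, hammingDist_lastOnes_succ (show j < m by omega)]

theorem total_hamming_cost_min_general (N k : ℕ) :
    (∀ w : ℕ → (Fin N → Bool),
      (∀ t < N.choose k, isKofN N k (w t)) →
      (∀ s < N.choose k, ∀ t < N.choose k, w s = w t → s = t) →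
      (∀ x : Fin N → Bool, isKofN N k x → ∃ t < N.choose k, w t = x) →
      2 * (N.choose k - 1) ≤
        ∑ t ∈ Finset.range (N.choose k - 1), hammingDist (w t) (w (t + 1))) ∧
    (∃ w : ℕ → (Fin N → Bool),
      (∀ t < N.choose k, isKofN N k (w t)) ∧
      (∀ s < N.choose k, ∀ t < N.choose k, w s = w t → s = t) ∧
      (∀ x : Fin N → Bool, isKofN N k x → ∃ t < N.choose k, w t = x) ∧
      (∀ t, t + 1 < N.choose k → hammingDist (w t) (w (t + 1)) = 2) ∧
      ∑ t ∈ Finset.range (N.choose k - 1), hammingDist (w t) (w (t + 1))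
        = 2 * (N.choose k - 1)) := by
  refine ⟨fun w hw hinj _ => ?_, ?_⟩
  · calc 2 * (N.choose k - 1) = #(range (N.choose k - 1)) • 2 := by simp [mul_comm]
      _ ≤ _ := card_nsmul_le_sum _ _ _ fun t ht => by
        rw [mem_range] at ht
        refine two_le_hammingDist_of_isKofN (hw t (by omega)) (hw (t + 1) (by omega)) fun h => ?_
        exact absurd (hinj t (by omega) (t + 1) (by omega) h) (by omega)
  have hlen := length_revolvingDoor N k
  let w t := (revolvingDoor N k).getD t fun _ => false
  have hw : ∀ t (ht : t < N.choose k), w t = (revolvingDoor N k)[t] := fun t _ =>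
    List.getD_eq_getElem _ _ _
  have hstep : ∀ t, t + 1 < N.choose k → hammingDist (w t) (w (t + 1)) = 2 := fun t ht => by
    rw [hw t (by omega), hw (t + 1) ht]
    exact List.isChain_iff_getElem.1 (isChain_revolvingDoor N k) t (by omega)
  refine ⟨w, fun t ht => ?_, fun s hs t ht hst => ?_, fun x hx => ?_, hstep, ?_⟩
  · rw [hw t ht, ← mem_revolvingDoor_iff]
    exact List.getElem_mem _
  · rw [hw s hs, hw t ht] at hst
    exact (nodup_revolvingDoor N k).getElem_inj_iff.1 hst
  · obtain ⟨t, ht, rfl⟩ := List.mem_iff_getElem.1 (mem_revolvingDoor_iff.2 hx)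
    exact ⟨t, hlen ▸ ht, hw t (hlen ▸ ht)⟩
  · rw [sum_congr rfl fun t ht => hstep t (by rw [mem_range] at ht; omega)]
    simp [mul_comm]

/-- Let `1 ≤ k ≤ N` and `M = C(N,k)`. Every sequence `w_0, …, w_{M-1}` listing each
`k`-of-`N` code exactly once has total Hamming cost `∑_{t<M-1} h(w_t, w_{t+1})`
at least `2(M−1)`; moreover, the minimum is attained by an enumeration whose
consecutive Hamming distances are all exactly `2`, of total Hamming cost `2(M−1)`. -/
theorem total_hamming_cost_min (N k : ℕ) (hk : 1 ≤ k) (hkN : k ≤ N) :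
    (∀ w : ℕ → (Fin N → Bool),
      (∀ t < N.choose k, isKofN N k (w t)) →
      (∀ s < N.choose k, ∀ t < N.choose k, w s = w t → s = t) →
      (∀ x : Fin N → Bool, isKofN N k x → ∃ t < N.choose k, w t = x) →
      2 * (N.choose k - 1) ≤
        ∑ t ∈ Finset.range (N.choose k - 1), hammingDist (w t) (w (t + 1))) ∧
    (∃ w : ℕ → (Fin N → Bool),
      (∀ t < N.choose k, isKofN N k (w t)) ∧
      (∀ s < N.choose k, ∀ t < N.choose k, w s = w t → s = t) ∧
      (∀ x : Fin N → Bool, isKofN N k x → ∃ t < N.choose k, w t = x) ∧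
      (∀ t, t + 1 < N.choose k → hammingDist (w t) (w (t + 1)) = 2) ∧
      ∑ t ∈ Finset.range (N.choose k - 1), hammingDist (w t) (w (t + 1))
        = 2 * (N.choose k - 1)) :=
  total_hamming_cost_min_general N k
end

section
/- For all integers n ≥ 1 and k ≥ 1, the binomial coefficient C(⌈k·n^{1/k}⌉, k) is at least n; that is, L = ⌈k·n^{1/k}⌉ bitmaps suffice to assign a distinct k-of-L code to each of n distinct values. -/
/-! If `r = n^{1/k}` and `m = ⌈k r⌉`, then `k^k n = (k r)^k ≤ m^k`. On the other hand
`m^k ≤ k^k C(m, k)` for `k ≤ m` (which holds as `k^k ≤ k^k n ≤ m^k`), since after multiplying by `k!` this compares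
`∏_{i<k} m (k - i)` with `∏_{i<k} k (m - i)` factor by factor. Cancelling `k^k` gives `n ≤ C(m, k)`. -/

namespace Nat

open Finset

theorem pow_mul_factorial_le_pow_mul_descFactorial {m k : ℕ} (hkm : k ≤ m) :
    m ^ k * k ! ≤ k ^ k * m.descFactorial k := by
  rw [← descFactorial_self, descFactorial_eq_prod_range, descFactorial_eq_prod_range,
    pow_eq_prod_const, pow_eq_prod_const, ← prod_mul_distrib, ← prod_mul_distrib]
  refine prod_le_prod' fun i _ => ?_
  rw [Nat.mul_sub, Nat.mul_sub, Nat.mul_comm m k]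
  exact Nat.sub_le_sub_left (Nat.mul_le_mul_right i hkm) _

theorem pow_le_pow_mul_choose {m k : ℕ} (hkm : k ≤ m) : m ^ k ≤ k ^ k * m.choose k := by
  refine Nat.le_of_mul_le_mul_right ?_ (factorial_pos k)
  calc m ^ k * k ! ≤ k ^ k * m.descFactorial k := pow_mul_factorial_le_pow_mul_descFactorial hkm
    _ = k ^ k * m.choose k * k ! := by rw [descFactorial_eq_factorial_mul_choose]; ring

end Nat

theorem pow_mul_le_ceil_mul_rpow_inv_pow {x : ℝ} (hx : 0 ≤ x) {k : ℕ} (hk : k ≠ 0) :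
    (k : ℝ) ^ k * x ≤ (⌈(k : ℝ) * x ^ ((k : ℝ)⁻¹)⌉₊ : ℝ) ^ k := by
  calc (k : ℝ) ^ k * x = ((k : ℝ) * x ^ ((k : ℝ)⁻¹)) ^ k := by
        rw [mul_pow, Real.rpow_inv_natCast_pow hx hk]
    _ ≤ _ := pow_le_pow_left₀ (by positivity) (Nat.le_ceil _) k

/-- For all integers `n ≥ 1` and `k ≥ 1`, we have `C(⌈k·n^{1/k}⌉, k) ≥ n`:
with `L = ⌈k·n^{1/k}⌉` bitmaps there are enough `k`-of-`L` codes to assign a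
distinct one to each of `n` distinct values. Here `n^{1/k}` is the real `k`-th
root of `n`. -/
theorem choose_ceil_k_root_ge (n k : ℕ) (hn : 1 ≤ n) (hk : 1 ≤ k) :
    n ≤ Nat.choose ⌈(k : ℝ) * (n : ℝ) ^ ((k : ℝ)⁻¹)⌉₊ k := by
  set m := ⌈(k : ℝ) * (n : ℝ) ^ ((k : ℝ)⁻¹)⌉₊
  have hk0 : k ≠ 0 := by omega
  have hpow : k ^ k * n ≤ m ^ k := by
    exact_mod_cast pow_mul_le_ceil_mul_rpow_inv_pow (Nat.cast_nonneg n) hk0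
  have hkm : k ≤ m :=
    (Nat.pow_le_pow_iff_left hk0).mp ((Nat.le_mul_of_pos_right _ hn).trans hpow)
  exact Nat.le_of_mul_le_mul_left (hpow.trans (Nat.pow_le_pow_mul_choose hkm)) (by positivity)
end

section
/- Consider a column of n rows taking values in a set of n_i distinct values, arranged so that equal values occupy consecutive rows (a sorted column). Let each value v be assigned an injective code(v) ∈ {0,1}^L, and suppose that for every two values that occur in consecutive (adjacent) runs of the column, the Hamming distance between their codes is exactly 2. Fix a word length w ≥ 1 with w dividing n, and for each bitmap position p ∈ {1,…,L} form the bitmap whose r-th bit is the p-th bit of the code of the value in row r. Then the total number of dirty words over all L bitmaps is at most 2·n_i. -/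
open Finset

/-!
Every dirty word of a bitmap contains a position where the bit changes from one row to the
next, and distinct words contain distinct such positions. Summed over the `L` bitmaps, the bit
changes between rows `r` and `r + 1` number the Hamming distance of the two codes: `2` at the
boundary of two runs and `0` inside a run. Sortedness makes `r ↦ val (r + 1)` injective on run
boundaries, so there are at most `nI` of them.
-/

section

variable {α β : Type*}

lemma eq_of_forall_lt_eq_succ {g : ℕ → β} {a k : ℕ}
    (h : ∀ i < k, g (a + i) = g (a + i + 1)) {j : ℕ} (hj : j ≤ k) : g (a + j) = g a := by
  induction j with
  | zero => rfl
  | succ j ih => rw [← add_assoc, ← h j (by omega), ih (by omega)]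

variable [DecidableEq β]

def dirtyWords (g : ℕ → β) (n w : ℕ) : Finset ℕ :=
  (range (n / w)).filter fun q =>
    ∃ j₁ ∈ range w, ∃ j₂ ∈ range w, g (q * w + j₁) ≠ g (q * w + j₂)

def changePoints (g : ℕ → β) (n : ℕ) : Finset ℕ :=
  (range (n - 1)).filter fun r => g r ≠ g (r + 1)

lemma exists_changePoint_div_eq_of_mem_dirtyWords {g : ℕ → β} {n w q : ℕ}
    (hq : q ∈ dirtyWords g n w) : ∃ r ∈ changePoints g n, r / w = q := by
  obtain ⟨hqn, j₁, hj₁, j₂, hj₂, hne⟩ := by simpa [dirtyWords] using hq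
  have hwn : q * w + w ≤ n := by
    have := Nat.div_mul_le_self n w
    nlinarith
  obtain ⟨i, hi, hgi⟩ : ∃ i < w - 1, g (q * w + i) ≠ g (q * w + i + 1) := by
    by_contra! hconst
    exact hne <| (eq_of_forall_lt_eq_succ hconst (by omega)).trans
      (eq_of_forall_lt_eq_succ hconst (by omega)).symm
  refine ⟨q * w + i, ?_, ?_⟩
  · simp only [changePoints, mem_filter, mem_range]
    exact ⟨by omega, hgi⟩
  · rw [mul_comm, Nat.mul_add_div (by omega), Nat.div_eq_of_lt (by omega), add_zero]

lemma card_dirtyWords_le_card_changePoints (g : ℕ → β) (n w : ℕ) :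
    #(dirtyWords g n w) ≤ #(changePoints g n) := by
  calc #(dirtyWords g n w) ≤ #((changePoints g n).image (· / w)) :=
        card_le_card fun q hq => by
          simpa using exists_changePoint_div_eq_of_mem_dirtyWords hq
    _ ≤ #(changePoints g n) := card_image_le

/-- On run boundaries the next value determines the row, since a value recurring after a
boundary would have to fill the whole boundary in between. -/
lemma card_changePoints_le_card [DecidableEq α] [Fintype α] {f : ℕ → α} {n : ℕ}
    (hsorted : ∀ a b c : ℕ, a ≤ b → b ≤ c → c < n → f a = f c → f a = f b) :
    #(changePoints f n) ≤ Fintype.card α := by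
  have hmem : ∀ r ∈ changePoints f n, r + 1 < n ∧ f r ≠ f (r + 1) := fun r hr => by
    simp only [changePoints, mem_filter, mem_range] at hr
    exact ⟨by omega, hr.2⟩
  have key : ∀ r₁ ∈ changePoints f n, ∀ r₂ ∈ changePoints f n,
      r₁ < r₂ → f (r₁ + 1) ≠ f (r₂ + 1) := fun r₁ _ r₂ h₂ hlt heq => by
    obtain ⟨hn₂, hne₂⟩ := hmem r₂ h₂
    exact hne₂ ((hsorted _ _ _ hlt le_self_add hn₂ heq).symm.trans heq)
  have hinj : Set.InjOn (fun r => f (r + 1)) (changePoints f n) := by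
    intro r₁ h₁ r₂ h₂ heq
    by_contra hne
    rcases Nat.lt_or_gt_of_ne hne with hlt | hlt
    · exact key r₁ h₁ r₂ h₂ hlt heq
    · exact key r₂ h₂ r₁ h₁ hlt heq.symm
  exact (card_le_card_of_injOn _ (fun _ _ => mem_univ _) hinj).trans_eq card_univ

lemma sum_card_changePoints_eq_sum_hammingDist {ι : Type*} [Fintype ι] (F : ℕ → ι → β)
    (n : ℕ) :
    ∑ p, #(changePoints (fun r => F r p) n) =
      ∑ r ∈ range (n - 1), hammingDist (F r) (F (r + 1)) := by
  simp only [changePoints, hammingDist, card_filter]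
  exact sum_comm

lemma sum_hammingDist_eq_two_mul_card_changePoints [DecidableEq α] {ι : Type*} [Fintype ι]
    {f : ℕ → α} {code : α → ι → β} {n : ℕ}
    (hadj : ∀ r : ℕ, r + 1 < n → f r ≠ f (r + 1) →
      hammingDist (code (f r)) (code (f (r + 1))) = 2) :
    ∑ r ∈ range (n - 1), hammingDist (code (f r)) (code (f (r + 1))) =
      2 * #(changePoints f n) := by
  rw [changePoints, card_eq_sum_ones, mul_sum, sum_filter]
  refine sum_congr rfl fun r hr => ?_
  rw [mem_range] at hr
  by_cases hr' : f r = f (r + 1)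
  · simp [hr']
  · rw [if_pos hr', hadj r (by omega) hr', mul_one]

end

theorem dirty_words_le_of_sorted_column_general (n nI L w : ℕ)
    (val : ℕ → Fin nI) (code : Fin nI → Fin L → Bool)
    (hsorted : ∀ a b c : ℕ, a ≤ b → b ≤ c → c < n → val a = val c → val a = val b)
    (hadj : ∀ r : ℕ, r + 1 < n → val r ≠ val (r + 1) →
      hammingDist (code (val r)) (code (val (r + 1))) = 2) :
    ∑ p : Fin L,
      ((Finset.range (n / w)).filter (fun q =>
        ∃ j₁ ∈ Finset.range w, ∃ j₂ ∈ Finset.range w,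
          code (val (q * w + j₁)) p ≠ code (val (q * w + j₂)) p)).card
      ≤ 2 * nI := by
  calc ∑ p, #(dirtyWords (fun r => code (val r) p) n w)
      ≤ ∑ p, #(changePoints (fun r => code (val r) p) n) :=
        sum_le_sum fun p _ => card_dirtyWords_le_card_changePoints _ n w
    _ = ∑ r ∈ range (n - 1), hammingDist (code (val r)) (code (val (r + 1))) :=
        sum_card_changePoints_eq_sum_hammingDist (fun r => code (val r)) n
    _ = 2 * #(changePoints val n) := sum_hammingDist_eq_two_mul_card_changePoints hadj
    _ ≤ 2 * nI :=
        Nat.mul_le_mul_left 2 ((card_changePoints_le_card hsorted).trans_eq (Fintype.card_fin nI))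

/-- A sorted column of `n` rows (`w ∣ n`, `w ≥ 1`) with values among `nI` distinct
values (`val`), where equal values occupy consecutive rows, encoded by an injective
code `Fin nI → Fin L → Bool` such that values in adjacent runs have codes at
Hamming distance exactly `2`. The `p`-th bitmap has `r`-th bit `code (val r) p`,
and is partitioned into `n / w` words of `w` consecutive bits; a word is dirty if
its bits are not all equal. Then the total number of dirty words over the `L`
bitmaps is at most `2 · nI`. -/
theorem dirty_words_le_of_sorted_column (n nI L w : ℕ) (hw : 1 ≤ w) (hdvd : w ∣ n)
    (val : ℕ → Fin nI) (code : Fin nI → Fin L → Bool)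
    (hinj : Function.Injective code)
    (hsorted : ∀ a b c : ℕ, a ≤ b → b ≤ c → c < n → val a = val c → val a = val b)
    (hadj : ∀ r : ℕ, r + 1 < n → val r ≠ val (r + 1) →
      hammingDist (code (val r)) (code (val (r + 1))) = 2) :
    ∑ p : Fin L,
      ((Finset.range (n / w)).filter (fun q =>
        ∃ j₁ ∈ Finset.range w, ∃ j₂ ∈ Finset.range w,
          code (val (q * w + j₁)) p ≠ code (val (q * w + j₂)) p)).card
      ≤ 2 * nI :=
  dirty_words_le_of_sorted_column_general n nI L w val code hsorted hadj
end

section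
/- Consider a column of n rows taking values in a set of n_i distinct values, arranged so that equal values occupy consecutive rows, with the n_i runs of values in an arbitrary order. Let each value be assigned a distinct unary code in {0,1}^L (a bit vector with exactly one 1-bit, distinct values receiving distinct 1-positions). Fix a word length w ≥ 1 with w dividing n, and for each bitmap position p ∈ {1,…,L} form the bitmap whose r-th bit is the p-th bit of the code of the value in row r. Then, irrespective of the order in which the distinct values appear, the total number of dirty words over all L bitmaps is at most 2·n_i. -/
/-- A sorted column of `n` rows (`w ∣ n`, `w ≥ 1`) with values among `nI` distinct
values (`val`), where equal values occupy consecutive rows (the runs being in an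
arbitrary order), encoded by unary codes: value `v` gets the bit vector of length
`L` whose only 1-bit is at position `pos v`, with `pos` injective. The `p`-th
bitmap has `r`-th bit `decide (pos (val r) = p)`, and is partitioned into `n / w`
words of `w` consecutive bits; a word is dirty if its bits are not all equal.
Then, irrespective of the order of the runs of values, the total number of dirty
words over the `L` bitmaps is at most `2 · nI`. -/
theorem dirty_words_le_of_sorted_column_unary (n nI L w : ℕ) (hw : 1 ≤ w) (hdvd : w ∣ n)
    (val : ℕ → Fin nI) (pos : Fin nI → Fin L)
    (hinj : Function.Injective pos)
    (hsorted : ∀ a b c : ℕ, a ≤ b → b ≤ c → c < n → val a = val c → val a = val b) :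
    ∑ p : Fin L,
      ((Finset.range (n / w)).filter (fun q =>
        ∃ j₁ ∈ Finset.range w, ∃ j₂ ∈ Finset.range w,
          decide (pos (val (q * w + j₁)) = p) ≠ decide (pos (val (q * w + j₂)) = p))).card
      ≤ 2 * nI := by
  classical
  set D : Fin L → Finset ℕ := fun p =>
    (Finset.range (n / w)).filter (fun q =>
        ∃ j₁ ∈ Finset.range w, ∃ j₂ ∈ Finset.range w,
          decide (pos (val (q * w + j₁)) = p) ≠ decide (pos (val (q * w + j₂)) = p)) with hD
  have hn : n / w * w = n := Nat.div_mul_cancel hdvd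
  have step : ∀ qa qb ia : ℕ, ia < w → qa < qb → qa * w + ia < qb * w := by
    intro qa qb ia hia hqq
    calc qa * w + ia < qa * w + w := by omega
      _ = (qa + 1) * w := by ring
      _ ≤ qb * w := Nat.mul_le_mul_right w hqq
  have hmem : ∀ p q, q ∈ D p → q < n / w ∧
      (∃ j < w, pos (val (q * w + j)) = p) ∧ (∃ j < w, pos (val (q * w + j)) ≠ p) := by
    intro p q hq
    rw [hD] at hq
    obtain ⟨hq1, j₁, hj₁, j₂, hj₂, hne⟩ := Finset.mem_filter.mp hq
    rw [Finset.mem_range] at hq1 hj₁ hj₂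
    refine ⟨hq1, ?_⟩
    by_cases h : pos (val (q * w + j₁)) = p
    · exact ⟨⟨j₁, hj₁, h⟩, ⟨j₂, hj₂, fun h2 => hne (by simp [h, h2])⟩⟩
    · by_cases h2 : pos (val (q * w + j₂)) = p
      · exact ⟨⟨j₂, hj₂, h2⟩, ⟨j₁, hj₁, h⟩⟩
      · exact absurd (by simp [h, h2]) hne
  have card2 : ∀ p, (D p).card ≤ 2 := by
    intro p
    by_contra hlt
    push_neg at hlt
    obtain ⟨a, ha, b, hb, c, hc, hab, hac, hbc⟩ := Finset.two_lt_card.mp hlt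
    have chain : ∀ q₁ q₂ q₃, q₁ ∈ D p → q₂ ∈ D p → q₃ ∈ D p → q₁ < q₂ → q₂ < q₃ → False := by
      intro q₁ q₂ q₃ h1 h2 h3 h12 h23
      obtain ⟨hq1, ⟨i₁, hi₁, hp1⟩, -⟩ := hmem p q₁ h1
      obtain ⟨hq2, -, ⟨i₂, hi₂, hp2⟩⟩ := hmem p q₂ h2
      obtain ⟨hq3, ⟨i₃, hi₃, hp3⟩, -⟩ := hmem p q₃ h3
      have hle1 : q₁ * w + i₁ ≤ q₂ * w + i₂ :=
        le_trans (step q₁ q₂ i₁ hi₁ h12).le (Nat.le_add_right _ _)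
      have hle2 : q₂ * w + i₂ ≤ q₃ * w + i₃ :=
        le_trans (step q₂ q₃ i₂ hi₂ h23).le (Nat.le_add_right _ _)
      have hlt3 : q₃ * w + i₃ < n := hn ▸ step q₃ (n / w) i₃ hi₃ hq3
      have hvv := hsorted _ _ _ hle1 hle2 hlt3 (hinj (hp1.trans hp3.symm))
      exact hp2 (hvv ▸ hp1)
    rcases hab.lt_or_gt with h1 | h1 <;> rcases hac.lt_or_gt with h2 | h2 <;>
      rcases hbc.lt_or_gt with h3 | h3 <;>
      first
        | exact chain a b c ha hb hc h1 h3
        | exact chain a c b ha hc hb h2 h3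
        | exact chain b a c hb ha hc h1 h2
        | exact chain b c a hb hc ha h3 h2
        | exact chain c a b hc ha hb h2 h1
        | exact chain c b a hc hb ha h3 h1
        | omega
  have hzero : ∀ p : Fin L, (∀ v : Fin nI, pos v ≠ p) → D p = ∅ := by
    intro p hp
    rw [hD]
    rw [Finset.filter_eq_empty_iff]
    intro q hq
    push_neg
    intro j₁ hj₁ j₂ hj₂
    simp [hp (val (q * w + j₁)), hp (val (q * w + j₂))]
  have hsum : ∑ p : Fin L, (D p).card
      = ∑ p ∈ Finset.image pos Finset.univ, (D p).card := by
    refine (Finset.sum_subset (Finset.subset_univ _) ?_).symm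
    intro p _ hp
    rw [hzero p (fun v hv => hp (Finset.mem_image.mpr ⟨v, Finset.mem_univ v, hv⟩))]
    simp
  calc ∑ p : Fin L, (D p).card
      = ∑ p ∈ Finset.image pos Finset.univ, (D p).card := hsum
    _ ≤ ∑ _p ∈ Finset.image pos Finset.univ, 2 :=
        Finset.sum_le_sum fun p _ => card2 p
    _ = 2 * (Finset.image pos Finset.univ).card := by
        rw [Finset.sum_const, smul_eq_mul, mul_comm]
    _ ≤ 2 * nI := by
        have := (Finset.card_image_le (s := (Finset.univ : Finset (Fin nI))) (f := pos))
        simp only [Finset.card_univ, Fintype.card_fin] at this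
        omega
end
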